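/- Let r_1, r_2, r_3, r_4 be pairwise coprime positive integers. Then for any finite group G, the 4-tuple (3r_1, 3r_2, 3r_3, 3r_4) is not G-harmonic; i.e. there do not exist subgroups U_1, U_2, U_3, U_4 of G with [G:U_i] = 3r_i for i = 1, 2, 3, 4 and elements g_1, g_2, g_3, g_4 ∈ G such that the cosets g_1U_1, g_2U_2, g_3U_3, g_4U_4 are pairwise disjoint. -/

import Mathlib

/-!
At most one `rᵢ` is even, so three of the four subgroups, say `Ua, Ub, Uc`, have odd `r`; let
`T` be the fourth, of index `3ρ`, with its coset `tT`. Comparing `[G : U ⊓ T]` with `[G : U]`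
and `[G : T]`, a coset `xU` disjoint from `tT` has `[T : U ⊓ T] = k r` and `[U : U ⊓ T] = k ρ`
for some `k ∈ {1, 2}`; the latter is the number of points of `G ⧸ T` met by `xU`, none of them
`tT`. If the images of two of the cosets share a point, the two cosets cut that `T`-coset in
disjoint cosets of subgroups of `T` of indices `k r` and `k' r'`, which therefore are not
coprime, so `k = k' = 2`. Counting in the `3ρ - 1` remaining points of `G ⧸ T` then yields a
point common to all three images, and inside it three pairwise disjoint cosets in `T` of
indices `2ra, 2rb, 2rc`. The same argument with `2` in place of `3` rules these out: there
`k = 1`, and two disjoint images of `s` points each would fit into `2s - 1` points.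
-/

open scoped Pointwise

namespace Subgroup

variable {G : Type*} [Group G]

theorem relIndex_mul_index_eq_index_inf (H K : Subgroup G) :
    H.relIndex K * K.index = (H ⊓ K).index := by
  rw [← inf_relIndex_right, relIndex_mul_index inf_le_right]

theorem ncard_image_mk_smul (T U : Subgroup G) (g : G) :
    (((↑) : G → G ⧸ T) '' (g • (U : Set G))).ncard = T.relIndex U := by
  have smul_one (u : U) : u • ((1 : G) : G ⧸ T) = ((u : G) : G ⧸ T) :=
    congrArg _ (mul_one (u : G))
  have h_orbit : ((↑) : G → G ⧸ T) '' (U : Set G) = MulAction.orbit U ((1 : G) : G ⧸ T) := by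
    ext q
    constructor
    · rintro ⟨u, hu, rfl⟩
      exact ⟨⟨u, hu⟩, smul_one _⟩
    · rintro ⟨u, rfl⟩
      exact ⟨u, u.2, (smul_one u).symm⟩
  rw [Set.image_smul_comm ((↑) : G → G ⧸ T) g _ (fun _ => rfl), Set.ncard_smul_set, h_orbit,
    ← MulAction.index_stabilizer]
  congr 1
  ext u
  rw [MulAction.mem_stabilizer_iff, smul_one, eq_comm, QuotientGroup.eq, inv_one, one_mul,
    mem_subgroupOf]

theorem image_mk_smul_subset_compl_of_disjoint {T U : Subgroup G} {g t : G}
    (d : Disjoint (g • (U : Set G)) (t • (T : Set G))) :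
    ((↑) : G → G ⧸ T) '' (g • (U : Set G)) ⊆ {(t : G ⧸ T)}ᶜ := by
  rintro _ ⟨y, hy, rfl⟩ (h : (y : G ⧸ T) = t)
  refine Set.disjoint_left.mp d hy ?_
  rw [mem_leftCoset_iff, SetLike.mem_coe, ← QuotientGroup.eq, h]

theorem ncard_compl_singleton_mk (T : Subgroup G) [T.FiniteIndex] (t : G) :
    ({(t : G ⧸ T)}ᶜ : Set (G ⧸ T)).ncard = T.index - 1 := by
  rw [Set.ncard_compl, Set.ncard_singleton, index_eq_card]

theorem relIndex_lt_index_of_disjoint {T U : Subgroup G} [T.FiniteIndex] {g t : G}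
    (d : Disjoint (g • (U : Set G)) (t • (T : Set G))) : T.relIndex U < T.index := by
  have h_le := Set.ncard_le_ncard (image_mk_smul_subset_compl_of_disjoint d)
  rw [ncard_image_mk_smul, ncard_compl_singleton_mk] at h_le
  have := FiniteIndex.index_ne_zero (H := T)
  omega

theorem not_coprime_index_of_disjoint {A B : Subgroup G} [B.FiniteIndex] {g x : G}
    (d : Disjoint (g • (A : Set G)) (x • (B : Set G))) : ¬ A.index.Coprime B.index := by
  intro h
  have h_dvd : B.index ∣ B.relIndex A * A.index := by
    rw [relIndex_mul_index_eq_index_inf]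
    exact index_dvd_of_le inf_le_left
  have h_ne : B.relIndex A ≠ 0 := FiniteIndex.index_ne_zero (H := B.subgroupOf A)
  exact (Nat.le_of_dvd (Nat.pos_of_ne_zero h_ne)
    (h.symm.dvd_of_dvd_mul_right h_dvd)).not_gt (relIndex_lt_index_of_disjoint d)

theorem exists_relIndex_eq_mul_of_disjoint {T U : Subgroup G} [T.FiniteIndex] [U.FiniteIndex]
    {g t : G} {p r σ : ℕ} (co : r.Coprime σ) (hU : U.index = p * r) (hT : T.index = p * σ)
    (d : Disjoint (g • (U : Set G)) (t • (T : Set G))) :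
    ∃ k, 0 < k ∧ k < p ∧ U.relIndex T = k * r ∧ T.relIndex U = k * σ := by
  have hp : 0 < p := Nat.pos_of_ne_zero (left_ne_zero_of_mul (hT ▸ FiniteIndex.index_ne_zero))
  have hr : 0 < r := Nat.pos_of_ne_zero (right_ne_zero_of_mul (hU ▸ FiniteIndex.index_ne_zero))
  have h_inf : U.relIndex T * (p * σ) = T.relIndex U * (p * r) := by
    rw [← hT, ← hU, relIndex_mul_index_eq_index_inf, relIndex_mul_index_eq_index_inf, inf_comm]
  have h_cancel : U.relIndex T * σ = r * T.relIndex U := by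
    apply Nat.eq_of_mul_eq_mul_left hp
    linarith
  obtain ⟨k, hk⟩ := co.dvd_of_dvd_mul_right (Dvd.intro _ h_cancel.symm)
  have hm : T.relIndex U = k * σ := by
    apply Nat.eq_of_mul_eq_mul_left hr
    rw [← h_cancel, hk]
    ring
  have h_lt := relIndex_lt_index_of_disjoint d
  have h_ne : T.relIndex U ≠ 0 := FiniteIndex.index_ne_zero (H := T.subgroupOf U)
  rw [hm, hT] at h_lt
  rw [hm] at h_ne
  exact ⟨k, Nat.pos_of_ne_zero (left_ne_zero_of_mul h_ne), Nat.lt_of_mul_lt_mul_right h_lt,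
    by rw [hk, mul_comm], hm⟩

theorem exists_mul_mem_of_mk_mem_image {T U : Subgroup G} {x y : G}
    (h : (y : G ⧸ T) ∈ ((↑) : G → G ⧸ T) '' (x • (U : Set G))) :
    ∃ a : T, y * a ∈ x • (U : Set G) := by
  obtain ⟨z, hz, hzy⟩ := h
  exact ⟨⟨y⁻¹ * z, QuotientGroup.eq.mp hzy.symm⟩, by simpa using hz⟩

theorem disjoint_smul_subgroupOf {T U V : Subgroup G} {g x y : G}
    (d : Disjoint (g • (U : Set G)) (x • (V : Set G))) {a b : T}
    (ha : y * a ∈ g • (U : Set G)) (hb : y * b ∈ x • (V : Set G)) :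
    Disjoint (a • (U.subgroupOf T : Set T)) (b • (V.subgroupOf T : Set T)) := by
  have mem_of_mem {W : Subgroup G} {w : G} {c z : T} (hc : y * c ∈ w • (W : Set G))
      (hz : z ∈ c • (W.subgroupOf T : Set T)) : y * z ∈ w • (W : Set G) := by
    rw [mem_leftCoset_iff] at hc hz ⊢
    simpa [mul_assoc] using mul_mem hc (mem_subgroupOf.mp hz)
  exact Set.disjoint_left.mpr fun z hza hzb =>
    Set.disjoint_left.mp d (mem_of_mem ha hza) (mem_of_mem hb hzb)

theorem not_coprime_relIndex_of_not_disjoint_image {T U V : Subgroup G} [V.FiniteIndex]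
    {g x : G} (d : Disjoint (g • (U : Set G)) (x • (V : Set G)))
    (h : ¬ Disjoint (((↑) : G → G ⧸ T) '' (g • (U : Set G)))
      (((↑) : G → G ⧸ T) '' (x • (V : Set G)))) :
    ¬ (U.relIndex T).Coprime (V.relIndex T) := by
  obtain ⟨q, hqU, hqV⟩ := Set.not_disjoint_iff.mp h
  obtain ⟨y, rfl⟩ := QuotientGroup.mk_surjective q
  obtain ⟨a, ha⟩ := exists_mul_mem_of_mk_mem_image hqU
  obtain ⟨b, hb⟩ := exists_mul_mem_of_mk_mem_image hqV
  exact not_coprime_index_of_disjoint (disjoint_smul_subgroupOf d ha hb)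

end Subgroup

open Subgroup

theorem false_of_disjoint_cosets_index_two_mul {H : Type*} [Group H] [Finite H]
    {V₁ V₂ V₃ : Subgroup H} {c₁ c₂ c₃ : H} {s₁ s₂ s₃ : ℕ}
    (c12 : s₁.Coprime s₂) (c13 : s₁.Coprime s₃) (c23 : s₂.Coprime s₃)
    (h₁ : V₁.index = 2 * s₁) (h₂ : V₂.index = 2 * s₂) (h₃ : V₃.index = 2 * s₃)
    (d12 : Disjoint (c₁ • (V₁ : Set H)) (c₂ • (V₂ : Set H)))
    (d13 : Disjoint (c₁ • (V₁ : Set H)) (c₃ • (V₃ : Set H)))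
    (d23 : Disjoint (c₂ • (V₂ : Set H)) (c₃ • (V₃ : Set H))) : False := by
  obtain ⟨k₁, hk₁, hk₁', hn₁, hm₁⟩ := exists_relIndex_eq_mul_of_disjoint c13 h₁ h₃ d13
  obtain ⟨k₂, hk₂, hk₂', hn₂, hm₂⟩ := exists_relIndex_eq_mul_of_disjoint c23 h₂ h₃ d23
  obtain rfl : k₁ = 1 := by omega
  obtain rfl : k₂ = 1 := by omega
  have h_disj : Disjoint (((↑) : H → H ⧸ V₃) '' (c₁ • (V₁ : Set H)))
      (((↑) : H → H ⧸ V₃) '' (c₂ • (V₂ : Set H))) := by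
    by_contra h
    exact not_coprime_relIndex_of_not_disjoint_image d12 h (by rwa [hn₁, hn₂, one_mul, one_mul])
  have h_le := Set.ncard_le_ncard (Set.union_subset
    (image_mk_smul_subset_compl_of_disjoint d13) (image_mk_smul_subset_compl_of_disjoint d23))
  rw [Set.ncard_union_eq h_disj, ncard_image_mk_smul, ncard_image_mk_smul, hm₁, hm₂,
    ncard_compl_singleton_mk, h₃] at h_le
  have := FiniteIndex.index_ne_zero (H := V₃)
  omega

theorem Finset.sum_ite_mem_univ_eq_mul_ncard {Ω : Type*} [Fintype Ω] (A : Set Ω)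
    [DecidablePred (· ∈ A)] (c : ℕ) :
    ∑ q, (if q ∈ A then c else 0) = c * A.ncard := by
  simp [Finset.sum_ite, Set.ncard_eq_toFinset_card', mul_comm]

/-- Double counting with weight `3 - k` on a set of size `k * ρ`: each set carries total weight
`2ρ`, while a point outside `A ∩ B ∩ C` receives weight at most `2`. -/
theorem Set.inter_inter_nonempty_of_ncard_eq_mul {Ω : Type*} [Finite Ω] {S A B C : Set Ω}
    {ρ a b c : ℕ} (hA : A ⊆ S) (hB : B ⊆ S) (hC : C ⊆ S) (hS : S.ncard < 3 * ρ)
    (ha : a = 1 ∨ a = 2) (hb : b = 1 ∨ b = 2) (hc : c = 1 ∨ c = 2)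
    (hA_card : A.ncard = a * ρ) (hB_card : B.ncard = b * ρ) (hC_card : C.ncard = c * ρ)
    (hAB : ¬ Disjoint A B → a = 2 ∧ b = 2) (hAC : ¬ Disjoint A C → a = 2 ∧ c = 2)
    (hBC : ¬ Disjoint B C → b = 2 ∧ c = 2) : (A ∩ B ∩ C).Nonempty := by
  classical
  have := Fintype.ofFinite Ω
  by_contra hABC
  have h_point (q : Ω) : (if q ∈ A then 3 - a else 0) + (if q ∈ B then 3 - b else 0) +
      (if q ∈ C then 3 - c else 0) ≤ if q ∈ S then 2 else 0 := by
    have hAB' := fun hqA hqB => hAB (Set.not_disjoint_iff.mpr ⟨q, hqA, hqB⟩)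
    have hAC' := fun hqA hqC => hAC (Set.not_disjoint_iff.mpr ⟨q, hqA, hqC⟩)
    have hBC' := fun hqB hqC => hBC (Set.not_disjoint_iff.mpr ⟨q, hqB, hqC⟩)
    have h_not_all : ¬ (q ∈ A ∧ q ∈ B ∧ q ∈ C) := fun ⟨h1, h2, h3⟩ => hABC ⟨q, ⟨h1, h2⟩, h3⟩
    grind
  have h_sum := Finset.sum_le_sum fun q (_ : q ∈ Finset.univ) => h_point q
  simp only [Finset.sum_add_distrib, Finset.sum_ite_mem_univ_eq_mul_ncard] at h_sum
  have h_weight {k : ℕ} (hk : k = 1 ∨ k = 2) : (3 - k) * (k * ρ) = 2 * ρ := by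
    rcases hk with rfl | rfl <;> ring
  rw [hA_card, hB_card, hC_card, h_weight ha, h_weight hb, h_weight hc] at h_sum
  omega

theorem Nat.eq_two_and_eq_two_of_not_coprime_mul {a b r s : ℕ} (ha : a = 1 ∨ a = 2)
    (hb : b = 1 ∨ b = 2) (hr : Odd r) (hs : Odd s) (hrs : r.Coprime s)
    (h : ¬ (a * r).Coprime (b * s)) : a = 2 ∧ b = 2 := by
  rcases ha with rfl | rfl <;> rcases hb with rfl | rfl
  · simp_all
  · exact absurd (by simpa using hr.coprime_two_right.mul_right hrs) h
  · exact absurd (by simpa using (hs.coprime_two_right.mul_right hrs.symm).symm) h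
  · exact ⟨rfl, rfl⟩

theorem false_of_disjoint_cosets_index_three_mul {G : Type*} [Group G] [Finite G]
    {T Ua Ub Uc : Subgroup G} {t xa xb xc : G} {ρ ra rb rc : ℕ}
    (oa : Odd ra) (ob : Odd rb) (oc : Odd rc)
    (cab : ra.Coprime rb) (cac : ra.Coprime rc) (cbc : rb.Coprime rc)
    (caρ : ra.Coprime ρ) (cbρ : rb.Coprime ρ) (ccρ : rc.Coprime ρ)
    (hT : T.index = 3 * ρ) (hUa : Ua.index = 3 * ra) (hUb : Ub.index = 3 * rb)
    (hUc : Uc.index = 3 * rc)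
    (dat : Disjoint (xa • (Ua : Set G)) (t • (T : Set G)))
    (dbt : Disjoint (xb • (Ub : Set G)) (t • (T : Set G)))
    (dct : Disjoint (xc • (Uc : Set G)) (t • (T : Set G)))
    (dab : Disjoint (xa • (Ua : Set G)) (xb • (Ub : Set G)))
    (dac : Disjoint (xa • (Ua : Set G)) (xc • (Uc : Set G)))
    (dbc : Disjoint (xb • (Ub : Set G)) (xc • (Uc : Set G))) : False := by
  obtain ⟨ka, hka, hka', hna, hma⟩ := exists_relIndex_eq_mul_of_disjoint caρ hUa hT dat
  obtain ⟨kb, hkb, hkb', hnb, hmb⟩ := exists_relIndex_eq_mul_of_disjoint cbρ hUb hT dbt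
  obtain ⟨kc, hkc, hkc', hnc, hmc⟩ := exists_relIndex_eq_mul_of_disjoint ccρ hUc hT dct
  have hka2 : ka = 1 ∨ ka = 2 := by omega
  have hkb2 : kb = 1 ∨ kb = 2 := by omega
  have hkc2 : kc = 1 ∨ kc = 2 := by omega
  have share {U V : Subgroup G} {x y : G} {k l r s : ℕ} (hk : k = 1 ∨ k = 2)
      (hl : l = 1 ∨ l = 2) (hr : Odd r) (hs : Odd s) (hrs : r.Coprime s)
      (hU : U.relIndex T = k * r) (hV : V.relIndex T = l * s)
      (d : Disjoint (x • (U : Set G)) (y • (V : Set G)))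
      (h : ¬ Disjoint (((↑) : G → G ⧸ T) '' (x • (U : Set G)))
        (((↑) : G → G ⧸ T) '' (y • (V : Set G)))) : k = 2 ∧ l = 2 :=
    Nat.eq_two_and_eq_two_of_not_coprime_mul hk hl hr hs hrs
      (hU ▸ hV ▸ not_coprime_relIndex_of_not_disjoint_image d h)
  have share_ab := share hka2 hkb2 oa ob cab hna hnb dab
  have share_ac := share hka2 hkc2 oa oc cac hna hnc dac
  have share_bc := share hkb2 hkc2 ob oc cbc hnb hnc dbc
  have hρ : T.index - 1 < 3 * ρ := by
    have := FiniteIndex.index_ne_zero (H := T)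
    omega
  obtain ⟨q, ⟨hqa, hqb⟩, hqc⟩ := Set.inter_inter_nonempty_of_ncard_eq_mul
    (image_mk_smul_subset_compl_of_disjoint dat) (image_mk_smul_subset_compl_of_disjoint dbt)
    (image_mk_smul_subset_compl_of_disjoint dct) (by rwa [ncard_compl_singleton_mk])
    hka2 hkb2 hkc2 (by rw [ncard_image_mk_smul, hma]) (by rw [ncard_image_mk_smul, hmb])
    (by rw [ncard_image_mk_smul, hmc]) share_ab share_ac share_bc
  obtain ⟨rfl, rfl⟩ := share_ab (Set.not_disjoint_iff.mpr ⟨q, hqa, hqb⟩)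
  obtain ⟨-, rfl⟩ := share_ac (Set.not_disjoint_iff.mpr ⟨q, hqa, hqc⟩)
  obtain ⟨y, rfl⟩ := QuotientGroup.mk_surjective q
  obtain ⟨a, ha⟩ := exists_mul_mem_of_mk_mem_image hqa
  obtain ⟨b, hb⟩ := exists_mul_mem_of_mk_mem_image hqb
  obtain ⟨c, hc⟩ := exists_mul_mem_of_mk_mem_image hqc
  exact false_of_disjoint_cosets_index_two_mul cab cac cbc hna hnb hnc
    (disjoint_smul_subgroupOf dab ha hb) (disjoint_smul_subgroupOf dac ha hc)
    (disjoint_smul_subgroupOf dbc hb hc)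

theorem not_G_harmonic_3r1_3r2_3r3_3r4_general
    (r₁ r₂ r₃ r₄ : ℕ)
    (h12 : Nat.Coprime r₁ r₂) (h13 : Nat.Coprime r₁ r₃) (h14 : Nat.Coprime r₁ r₄)
    (h23 : Nat.Coprime r₂ r₃) (h24 : Nat.Coprime r₂ r₄) (h34 : Nat.Coprime r₃ r₄)
    (G : Type*) [Group G] [Fintype G] :
    ¬ ∃ (U₁ U₂ U₃ U₄ : Subgroup G) (g₁ g₂ g₃ g₄ : G),
      U₁.index = 3 * r₁ ∧ U₂.index = 3 * r₂ ∧ U₃.index = 3 * r₃ ∧ U₄.index = 3 * r₄ ∧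
      Disjoint (g₁ • (U₁ : Set G)) (g₂ • (U₂ : Set G)) ∧
      Disjoint (g₁ • (U₁ : Set G)) (g₃ • (U₃ : Set G)) ∧
      Disjoint (g₁ • (U₁ : Set G)) (g₄ • (U₄ : Set G)) ∧
      Disjoint (g₂ • (U₂ : Set G)) (g₃ • (U₃ : Set G)) ∧
      Disjoint (g₂ • (U₂ : Set G)) (g₄ • (U₄ : Set G)) ∧
      Disjoint (g₃ • (U₃ : Set G)) (g₄ • (U₄ : Set G)) := by
  rintro ⟨U₁, U₂, U₃, U₄, g₁, g₂, g₃, g₄, hU₁, hU₂, hU₃, hU₄, d12, d13, d14, d23, d24, d34⟩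
  have odd_of_even {m n : ℕ} (h : m.Coprime n) (hm : Even m) : Odd n :=
    Nat.Coprime.odd_of_left (Nat.Coprime.coprime_dvd_left hm.two_dvd h)
  by_cases e₁ : Even r₁
  · exact false_of_disjoint_cosets_index_three_mul (odd_of_even h12 e₁) (odd_of_even h13 e₁)
      (odd_of_even h14 e₁) h23 h24 h34 h12.symm h13.symm h14.symm hU₁ hU₂ hU₃ hU₄
      d12.symm d13.symm d14.symm d23 d24 d34
  rw [Nat.not_even_iff_odd] at e₁
  by_cases e₂ : Even r₂
  · exact false_of_disjoint_cosets_index_three_mul e₁ (odd_of_even h23 e₂) (odd_of_even h24 e₂)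
      h13 h14 h34 h12 h23.symm h24.symm hU₂ hU₁ hU₃ hU₄ d12 d23.symm d24.symm d13 d14 d34
  rw [Nat.not_even_iff_odd] at e₂
  by_cases e₃ : Even r₃
  · exact false_of_disjoint_cosets_index_three_mul e₁ e₂ (odd_of_even h34 e₃)
      h12 h14 h24 h13 h23 h34.symm hU₃ hU₁ hU₂ hU₄ d13 d23 d34.symm d12 d14 d24
  rw [Nat.not_even_iff_odd] at e₃
  exact false_of_disjoint_cosets_index_three_mul e₁ e₂ e₃
    h12 h13 h23 h14 h24 h34 hU₄ hU₁ hU₂ hU₃ d14 d24 d34 d12 d13 d23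

theorem not_G_harmonic_3r1_3r2_3r3_3r4
    (r₁ r₂ r₃ r₄ : ℕ) (hr₁ : 0 < r₁) (hr₂ : 0 < r₂) (hr₃ : 0 < r₃) (hr₄ : 0 < r₄)
    (h12 : Nat.Coprime r₁ r₂) (h13 : Nat.Coprime r₁ r₃) (h14 : Nat.Coprime r₁ r₄)
    (h23 : Nat.Coprime r₂ r₃) (h24 : Nat.Coprime r₂ r₄) (h34 : Nat.Coprime r₃ r₄)
    (G : Type*) [Group G] [Fintype G] :
    ¬ ∃ (U₁ U₂ U₃ U₄ : Subgroup G) (g₁ g₂ g₃ g₄ : G),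
      U₁.index = 3 * r₁ ∧ U₂.index = 3 * r₂ ∧ U₃.index = 3 * r₃ ∧ U₄.index = 3 * r₄ ∧
      Disjoint (g₁ • (U₁ : Set G)) (g₂ • (U₂ : Set G)) ∧
      Disjoint (g₁ • (U₁ : Set G)) (g₃ • (U₃ : Set G)) ∧
      Disjoint (g₁ • (U₁ : Set G)) (g₄ • (U₄ : Set G)) ∧
      Disjoint (g₂ • (U₂ : Set G)) (g₃ • (U₃ : Set G)) ∧
      Disjoint (g₂ • (U₂ : Set G)) (g₄ • (U₄ : Set G)) ∧
      Disjoint (g₃ • (U₃ : Set G)) (g₄ • (U₄ : Set G)) :=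
  not_G_harmonic_3r1_3r2_3r3_3r4_general r₁ r₂ r₃ r₄ h12 h13 h14 h23 h24 h34 G
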